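/- arXiv:1403.0610 — 3 statements merged into one kernel-verified Lean document; each statement's English description precedes it below -/
import Mathlib

section
/- Let d ≥ 0 be an integer and suppose ζ ∈ R is a primitive p^{d+1}-th root of unity. Let w ∈ W(K) be the unique Witt vector whose ghost components are ghost_i(w) = ζ^{p^i} − 1 for all i ≥ 0. Then every Witt coordinate of w lies in R; that is, w ∈ W(R). -/
/-!
The Teichmüller representative `[ζ]` has ghost components `ζ ^ p ^ i`, so `[ζ] - 1` has the
prescribed ghost components; as `p` is invertible in `K` the ghost map is injective, hence
`w = [ζ] - 1`, which is the image of a Witt vector over `R` because `ζ ∈ R`.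
-/

def AbsoluteValue.integers {R : Type*} [Ring R] [Nontrivial R] (v : AbsoluteValue R ℝ)
    (hna : IsNonarchimedean v) : Subring R where
  carrier := {x | v x ≤ 1}
  one_mem' := (map_one v).le
  mul_mem' {a b} ha hb := by
    simpa only [Set.mem_ofPred_eq, map_mul] using mul_le_one₀ ha (v.nonneg b) hb
  zero_mem' := by simp
  add_mem' {a b} ha hb := (hna a b).trans (max_le ha hb)
  neg_mem' {a} ha := by simpa only [Set.mem_ofPred_eq, v.map_neg] using ha

namespace WittVector

variable {p : ℕ} [Fact p.Prime] {A : Type*} [CommRing A]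

theorem ghostComponent_teichmuller_sub_one (x : A) (i : ℕ) :
    ghostComponent i (teichmuller p x - 1) = x ^ p ^ i - 1 := by
  rw [map_sub, map_one, ghostComponent_teichmuller]

theorem eq_teichmuller_sub_one_of_ghostComponent [Invertible (p : A)] {x : A}
    {w : WittVector p A} (hw : ∀ i, ghostComponent i w = x ^ p ^ i - 1) :
    w = teichmuller p x - 1 := by
  apply (ghostMap.bijective_of_invertible p A).injective
  funext i
  rw [ghostMap_apply, ghostMap_apply, hw, ghostComponent_teichmuller_sub_one]

theorem coeff_teichmuller_sub_one_mem (S : Subring A) {x : A} (hx : x ∈ S) (n : ℕ) :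
    (teichmuller p x - 1).coeff n ∈ S := by
  have : teichmuller p x - 1 = map S.subtype (teichmuller p ⟨x, hx⟩ - 1) := by
    rw [map_sub, map_one, map_teichmuller]; rfl
  rw [this, map_coeff]
  exact SetLike.coe_mem _

end WittVector

theorem statement_0_general (p : ℕ) [Fact p.Prime] (K : Type*) [Field K] [CharZero K]
    (v : AbsoluteValue K ℝ)
    (hna : ∀ x y : K, v (x + y) ≤ max (v x) (v y))
    (ζ : K) (hζR : v ζ ≤ 1)
    (w : WittVector p K)
    (hw : ∀ i : ℕ, WittVector.ghostComponent i w = ζ ^ (p ^ i) - 1) :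
    ∀ n : ℕ, v (w.coeff n) ≤ 1 := by
  have : Invertible (p : K) :=
    invertibleOfNonzero (Nat.cast_ne_zero.mpr (Fact.out : p.Prime).ne_zero)
  rw [WittVector.eq_teichmuller_sub_one_of_ghostComponent hw]
  exact WittVector.coeff_teichmuller_sub_one_mem (v.integers hna) hζR

theorem statement_0 (p : ℕ) [Fact p.Prime] (K : Type*) [Field K] [CharZero K]
    (v : AbsoluteValue K ℝ)
    (hna : ∀ x y : K, v (x + y) ≤ max (v x) (v y))
    (hvp : v (p : K) = 1 / (p : ℝ))
    (d : ℕ) (ζ : K) (hζR : v ζ ≤ 1) (hζ : IsPrimitiveRoot ζ (p ^ (d + 1)))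
    (w : WittVector p K)
    (hw : ∀ i : ℕ, WittVector.ghostComponent i w = ζ ^ (p ^ i) - 1) :
    ∀ n : ℕ, v (w.coeff n) ≤ 1 :=
  statement_0_general p K v hna ζ hζR w hw
end

section
/- Let P ∈ K[T] be a polynomial with P(0) = 0 and write exp(P(T)) = ∑_{n≥0} b_n T^n ∈ K⟦T⟧. Then limsup_{n→∞} ‖b_n‖^{1/n} ≤ 1 if and only if ‖b_n‖ ≤ 1 for every n ≥ 0. (Equivalently: the radius of convergence of exp(P(T)) is at least 1 if and only if all its coefficients lie in R.) -/
/-!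
Suppose `limsup ‖b_n‖^{1/n} ≤ 1` and fix `0 < r < 1`, so that `‖b_n‖ r^n → 0`. If some weighted
coefficient `‖b_n‖ r^n` exceeded `1`, let `M > 1` be their maximum and `τ` the largest index
attaining it. By the ultrametric inequality the coefficient of `X^{Nτ}` in `exp(P)^N` then has
weighted size exactly `M^N`. But `exp(P)^N = exp(N P)`, and for `N = p^m` with `m` large the factor
`‖N‖^k` compensates the denominators `‖1/k!‖ ≤ p^k` (Legendre), so `exp(N P)` has integral
coefficients and `M^N ≤ 1`. Hence `‖b_n‖ r^n ≤ 1` for every `r < 1`, that is `‖b_n‖ ≤ 1`.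
-/

open Filter

/-- The formal exponential `exp(f)` of a power series `f` (intended for `f` with zero
constant coefficient), defined coefficientwise by
`coeff n (exp f) = ∑_{k=0}^{n} (coeff n of f^k) / k!`. -/
noncomputable def pexp {K : Type*} [Field K] (f : PowerSeries K) : PowerSeries K :=
  PowerSeries.mk fun n =>
    ∑ k ∈ Finset.range (n + 1), (k.factorial : K)⁻¹ * PowerSeries.coeff n (f ^ k)

open PowerSeries Topology Finset.HasAntidiagonal

section Padic

variable {K : Type*} [Field K] {v : AbsoluteValue K ℝ}

theorem IsNonarchimedean.abv_natCast_eq_one_of_not_dvd (hna : IsNonarchimedean v) {p : ℕ}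
    (hp : p.Prime) (hvp : v p < 1) {m : ℕ} (hm : ¬ p ∣ m) : v m = 1 := by
  obtain ⟨a, c, hac⟩ := Nat.isCoprime_iff_coprime.mpr ((hp.coprime_iff_not_dvd).mpr hm)
  have hac' : (a : K) * p + c * m = 1 := by exact_mod_cast congrArg (Int.cast : ℤ → K) hac
  have hap : v (-(a * p)) < v 1 := by
    rw [map_neg_eq_map, map_mul, map_one]
    exact (mul_le_of_le_one_left (v.nonneg _) hna.apply_intCast_le_one).trans_lt hvp
  have hcm : v (c * m) = 1 := by
    rw [show (c : K) * m = 1 + -(a * p) by linear_combination hac', hna.add_eq_left_of_lt hap,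
      map_one]
  refine le_antisymm hna.apply_natCast_le_one ?_
  calc 1 = v c * v m := by rw [← map_mul, hcm]
    _ ≤ v m := mul_le_of_le_one_left (v.nonneg _) hna.apply_intCast_le_one

theorem IsNonarchimedean.abv_natCast_eq_pow_padicValNat (hna : IsNonarchimedean v) {p : ℕ}
    (hp : p.Prime) (hvp : v p < 1) {n : ℕ} (hn : n ≠ 0) : v n = v p ^ padicValNat p n := by
  conv_lhs => rw [← Nat.ordProj_mul_ordCompl_eq_self n p]
  rw [Nat.cast_mul, map_mul, Nat.cast_pow, map_pow,
    hna.abv_natCast_eq_one_of_not_dvd hp hvp (Nat.not_dvd_ordCompl hp hn), mul_one,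
    Nat.factorization_def n hp]

theorem IsNonarchimedean.abv_pow_le_abv_factorial (hna : IsNonarchimedean v) {p : ℕ}
    [Fact p.Prime] (hvp : v p < 1) (k : ℕ) : v p ^ k ≤ v k.factorial := by
  rw [hna.abv_natCast_eq_pow_padicValNat Fact.out hvp k.factorial_ne_zero]
  exact pow_le_pow_of_le_one (v.nonneg _) hvp.le (padicValNat_factorial_le (p := p) k)

theorem IsNonarchimedean.abv_inv_factorial_le (hna : IsNonarchimedean v) {p : ℕ}
    [Fact p.Prime] (hvp : v p = 1 / p) (k : ℕ) : v (k.factorial : K)⁻¹ ≤ (p : ℝ) ^ k := by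
  have hp1 : (1 : ℝ) < p := by exact_mod_cast (Fact.out : p.Prime).one_lt
  have hvp_pos : 0 < v p := by rw [hvp]; positivity
  have hvp_lt : v p < 1 := by rw [hvp]; exact (div_lt_one (by linarith)).mpr hp1
  calc v (k.factorial : K)⁻¹ = (v k.factorial)⁻¹ := map_inv₀ v _
    _ ≤ (v p ^ k)⁻¹ := inv_anti₀ (pow_pos hvp_pos k) (hna.abv_pow_le_abv_factorial hvp_lt k)
    _ = (p : ℝ) ^ k := by rw [hvp, one_div, inv_pow, inv_inv]

end Padic

section CoeffBounds

variable {K : Type*} [Field K] {v : AbsoluteValue K ℝ}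

theorem Polynomial.exists_forall_abv_coeff_le (v : AbsoluteValue K ℝ) (P : Polynomial K) :
    ∃ B, 0 ≤ B ∧ ∀ i, v (P.coeff i) ≤ B := by
  have hnonneg : 0 ≤ ∑ i ∈ P.support, v (P.coeff i) := Finset.sum_nonneg fun _ _ => v.nonneg _
  refine ⟨_, hnonneg, fun i => ?_⟩
  by_cases hi : i ∈ P.support
  · exact Finset.single_le_sum (f := fun i => v (P.coeff i)) (fun _ _ => v.nonneg _) hi
  · rwa [Polynomial.notMem_support_iff.mp hi, map_zero]

theorem IsNonarchimedean.exists_abv_coeff_mul_le (hna : IsNonarchimedean v) (f g : K⟦X⟧)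
    (n : ℕ) : ∃ ij ∈ antidiagonal n,
      v (coeff n (f * g)) ≤ v (coeff ij.1 f) * v (coeff ij.2 g) := by
  obtain ⟨ij, hij, hle⟩ := hna.finset_image_add_of_nonempty
    (fun ij => coeff ij.1 f * coeff ij.2 g) (t := antidiagonal n) ⟨(0, n), by simp⟩
  refine ⟨ij, hij, ?_⟩
  rw [coeff_mul, ← map_mul]
  exact hle

theorem IsNonarchimedean.abv_coeff_pow_le (hna : IsNonarchimedean v) {f : K⟦X⟧} {B : ℝ}
    (hB0 : 0 ≤ B) (hB : ∀ i, v (coeff i f) ≤ B) (k n : ℕ) : v (coeff n (f ^ k)) ≤ B ^ k := by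
  induction k generalizing n with
  | zero => rw [pow_zero, pow_zero, coeff_one]; split_ifs <;> simp
  | succ k ih =>
    obtain ⟨ij, -, hle⟩ := hna.exists_abv_coeff_mul_le (f ^ k) f n
    rw [pow_succ, pow_succ]
    exact hle.trans (mul_le_mul (ih _) (hB _) (v.nonneg _) (pow_nonneg hB0 _))

theorem IsNonarchimedean.abv_coeff_pexp_le (hna : IsNonarchimedean v) {p : ℕ} [Fact p.Prime]
    (hvp : v p = 1 / p) {f : K⟦X⟧} {B : ℝ} (hB0 : 0 ≤ B) (hB : ∀ i, v (coeff i f) ≤ B)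
    (n : ℕ) : v (coeff n (pexp f)) ≤ max 1 (p * B) ^ n := by
  obtain ⟨k, hk, hle⟩ := hna.finset_image_add_of_nonempty
    (fun k => (k.factorial : K)⁻¹ * coeff n (f ^ k)) (Finset.nonempty_range_add_one (n := n))
  rw [pexp, coeff_mk]
  refine hle.trans ?_
  calc v ((k.factorial : K)⁻¹ * coeff n (f ^ k)) ≤ (p : ℝ) ^ k * B ^ k := by
        rw [map_mul]
        exact mul_le_mul (hna.abv_inv_factorial_le hvp k) (hna.abv_coeff_pow_le hB0 hB k n)
          (v.nonneg _) (by positivity)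
    _ = (p * B) ^ k := (mul_pow _ _ _).symm
    _ ≤ max 1 (p * B) ^ k := pow_le_pow_left₀ (by positivity) (le_max_right _ _) k
    _ ≤ max 1 (p * B) ^ n :=
        pow_le_pow_right₀ (le_max_left _ _) (Nat.lt_succ_iff.mp (Finset.mem_range.mp hk))

theorem IsNonarchimedean.abv_coeff_pexp_pow_nsmul_le_one (hna : IsNonarchimedean v) {p : ℕ}
    [Fact p.Prime] (hvp : v p = 1 / p) {f : K⟦X⟧} {B : ℝ} (hB0 : 0 ≤ B)
    (hB : ∀ i, v (coeff i f) ≤ B) {m : ℕ} (hm : p * B ≤ (p : ℝ) ^ m) (n : ℕ) :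
    v (coeff n (pexp (p ^ m • f))) ≤ 1 := by
  have hvpm : v ((p ^ m : ℕ) : K) = ((p : ℝ) ^ m)⁻¹ := by
    rw [Nat.cast_pow, map_pow, hvp, one_div, inv_pow]
  have hB' : ∀ i, v (coeff i (p ^ m • f)) ≤ ((p : ℝ) ^ m)⁻¹ * B := fun i => by
    rw [map_nsmul, nsmul_eq_mul, map_mul, hvpm]
    exact mul_le_mul_of_nonneg_left (hB i) (by positivity)
  have hpB : (p : ℝ) * (((p : ℝ) ^ m)⁻¹ * B) ≤ 1 := by
    rw [mul_left_comm, inv_mul_le_one₀ (pow_pos (by exact_mod_cast (Fact.out : p.Prime).pos) m)]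
    exact hm
  simpa [max_eq_left hpB] using hna.abv_coeff_pexp_le hvp (by positivity) hB' n

end CoeffBounds

theorem PowerSeries.pexp_eq_subst_exp {K : Type*} [Field K] [CharZero K] {f : K⟦X⟧}
    (hf : constantCoeff f = 0) : pexp f = (exp K).subst f := by
  ext n
  rw [coeff_subst' (HasSubst.of_constantCoeff_zero' hf), pexp, coeff_mk,
    finsum_eq_sum_of_support_subset (s := Finset.range (n + 1))]
  · simp [coeff_exp]
  · intro d hd
    by_contra h
    simp only [Finset.coe_range, Set.mem_Iio, not_lt] at h
    have hdvd : X ^ d ∣ f ^ d := pow_dvd_pow_of_dvd (X_dvd_iff.mpr hf) d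
    exact hd (by simp [X_pow_dvd_iff.mp hdvd n (Nat.lt_of_succ_le h)])

theorem PowerSeries.pexp_pow {K : Type*} [Field K] [CharZero K] {f : K⟦X⟧}
    (hf : constantCoeff f = 0) (N : ℕ) : pexp f ^ N = pexp (N • f) := by
  have hs := HasSubst.of_constantCoeff_zero' hf
  have hNf : constantCoeff (N • f) = 0 := by simp [hf]
  -- `exp ^ N = exp (N • X)`; now substitute `f` for `X`.
  rw [pexp_eq_subst_exp hf, pexp_eq_subst_exp hNf, ← subst_pow hs, exp_pow_eq_rescale_exp,
    rescale_eq_subst, subst_comp_subst_apply (HasSubst.smul_X' _) hs, subst_smul hs, subst_X hs,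
    Nat.cast_smul_eq_nsmul]

section Dominant

variable {K : Type*} [Field K] {v : AbsoluteValue K ℝ} {r : ℝ}

variable (v) in
/-- `M` is the Gauss norm `sup_j v(a_j) r^j` of `f = ∑ a_j X^j` and `τ` the largest index
attaining it. -/
structure IsDominantIndex (r : ℝ) (f : K⟦X⟧) (τ : ℕ) (M : ℝ) : Prop where
  le : ∀ j, v (coeff j f) * r ^ j ≤ M
  eq : v (coeff τ f) * r ^ τ = M
  lt : ∀ j, τ < j → v (coeff j f) * r ^ j < M

theorem isDominantIndex_one : IsDominantIndex v r 1 0 1 where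
  le j := by rw [coeff_one]; split_ifs <;> simp_all
  eq := by simp
  lt j hj := by simp [coeff_one, hj.ne']

theorem IsDominantIndex.pos {f : K⟦X⟧} {τ : ℕ} {M : ℝ} (h : IsDominantIndex v r f τ M)
    (hr : 0 ≤ r) : 0 < M :=
  (mul_nonneg (v.nonneg _) (pow_nonneg hr _)).trans_lt (h.lt _ τ.lt_succ_self)

theorem IsDominantIndex.mul (hna : IsNonarchimedean v) (hr : 0 < r) {g h : K⟦X⟧} {τg τh : ℕ}
    {Mg Mh : ℝ} (hg : IsDominantIndex v r g τg Mg) (hh : IsDominantIndex v r h τh Mh) :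
    IsDominantIndex v r (g * h) (τg + τh) (Mg * Mh) := by
  have weighted : ∀ i i', v (coeff i g) * v (coeff i' h) * r ^ (i + i') =
      (v (coeff i g) * r ^ i) * (v (coeff i' h) * r ^ i') := fun i i' => by ring
  have term_le : ∀ i i', v (coeff i g) * v (coeff i' h) * r ^ (i + i') ≤ Mg * Mh :=
    fun i i' => (weighted i i').trans_le <|
      mul_le_mul (hg.le i) (hh.le i') (by positivity) (hg.pos hr.le).le
  have term_lt : ∀ i i', τg < i ∨ τh < i' →
      v (coeff i g) * v (coeff i' h) * r ^ (i + i') < Mg * Mh := by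
    rintro i i' (hi | hi) <;> rw [weighted]
    · exact mul_lt_mul_of_lt_of_le_of_nonneg_of_pos (hg.lt i hi) (hh.le i') (by positivity)
        (hh.pos hr.le)
    · exact mul_lt_mul_of_le_of_lt_of_nonneg_of_pos (hg.le i) (hh.lt i' hi) (by positivity)
        (hg.pos hr.le)
  refine ⟨fun j => ?_, ?_, fun j hj => ?_⟩
  · obtain ⟨⟨i, i'⟩, hii, hle⟩ := hna.exists_abv_coeff_mul_le g h j
    rw [mem_antidiagonal] at hii
    subst hii
    exact (mul_le_mul_of_nonneg_right hle (by positivity)).trans (term_le i i')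
  · have hdiag : v (coeff τg g * coeff τh h) * r ^ (τg + τh) = Mg * Mh := by
      rw [map_mul, weighted, hg.eq, hh.eq]
    rw [coeff_mul, hna.apply_sum_eq_of_lt (k := (τg, τh)) (fun a => (map_neg_eq_map v a).symm)
      (mem_antidiagonal.mpr rfl), hdiag]
    rintro ⟨i, i'⟩ hii hne
    rw [mem_antidiagonal] at hii
    refine lt_of_mul_lt_mul_right (a := r ^ (τg + τh)) ?_ (by positivity)
    rw [hdiag, map_mul, ← hii]
    refine term_lt i i' ?_
    by_contra! hle
    exact hne (Prod.ext (by simp only; omega) (by simp only; omega))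
  · obtain ⟨⟨i, i'⟩, hii, hle⟩ := hna.exists_abv_coeff_mul_le g h j
    rw [mem_antidiagonal] at hii
    subst hii
    exact (mul_le_mul_of_nonneg_right hle (by positivity)).trans_lt (term_lt i i' (by omega))

theorem IsDominantIndex.pow (hna : IsNonarchimedean v) (hr : 0 < r) {f : K⟦X⟧} {τ : ℕ}
    {M : ℝ} (h : IsDominantIndex v r f τ M) (n : ℕ) :
    IsDominantIndex v r (f ^ n) (n * τ) (M ^ n) := by
  induction n with
  | zero => simpa using isDominantIndex_one
  | succ n ih => simpa only [pow_succ, add_mul, one_mul] using ih.mul hna hr h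

end Dominant

theorem exists_forall_le_and_forall_lt_of_eventually_lt {α : Type*} [LinearOrder α]
    {w : ℕ → α} {n₀ : ℕ} (h : ∀ᶠ j in atTop, w j < w n₀) :
    ∃ τ, (∀ j, w j ≤ w τ) ∧ ∀ j, τ < j → w j < w τ := by
  obtain ⟨J, hJ⟩ := eventually_atTop.mp h
  have hn₀ : n₀ < J := by
    by_contra! hle
    exact lt_irrefl _ (hJ n₀ hle)
  obtain ⟨m, hm, hmax⟩ :=
    (Finset.range J).exists_max_image w ⟨n₀, Finset.mem_range.mpr hn₀⟩
  have hbig : ∀ j, J ≤ j → w j < w m :=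
    fun j hj => (hJ j hj).trans_le (hmax n₀ (Finset.mem_range.mpr hn₀))
  set S := (Finset.range J).filter (fun j => w j = w m)
  have hS : S.Nonempty := ⟨m, Finset.mem_filter.mpr ⟨hm, rfl⟩⟩
  have hτ : w (S.max' hS) = w m := (Finset.mem_filter.mp (S.max'_mem hS)).2
  refine ⟨S.max' hS, fun j => ?_, fun j hj => ?_⟩ <;> rw [hτ] <;>
    rcases lt_or_ge j J with hjJ | hjJ
  · exact hmax j (Finset.mem_range.mpr hjJ)
  · exact (hbig j hjJ).le
  · refine (hmax j (Finset.mem_range.mpr hjJ)).lt_of_ne fun heq => ?_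
    exact (S.le_max' j (Finset.mem_filter.mpr ⟨Finset.mem_range.mpr hjJ, heq⟩)).not_gt hj
  · exact hbig j hjJ

theorem isBoundedUnder_rpow_inv_of_le_pow {a : ℕ → ℝ} (ha : ∀ n, 0 ≤ a n) {C : ℝ} (hC : 0 ≤ C)
    (h : ∀ n, a n ≤ C ^ n) :
    IsBoundedUnder (· ≤ ·) atTop (fun n : ℕ => a n ^ (1 / (n : ℝ))) := by
  refine isBoundedUnder_of ⟨max 1 C, fun n => ?_⟩
  rcases eq_or_ne n 0 with rfl | hn
  · simp
  calc a n ^ (1 / (n : ℝ)) ≤ (C ^ n) ^ (1 / (n : ℝ)) :=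
        Real.rpow_le_rpow (ha n) (h n) (by positivity)
    _ = C := by rw [one_div, Real.pow_rpow_inv_natCast hC hn]
    _ ≤ max 1 C := le_max_right _ _

theorem eventually_mul_pow_lt_one_of_limsup_lt {a : ℕ → ℝ} (ha : ∀ n, 0 ≤ a n)
    (hbdd : IsBoundedUnder (· ≤ ·) atTop (fun n : ℕ => a n ^ (1 / (n : ℝ)))) {r : ℝ}
    (hr : 0 < r) (hlim : limsup (fun n : ℕ => a n ^ (1 / (n : ℝ))) atTop < r⁻¹) :
    ∀ᶠ n in atTop, a n * r ^ n < 1 := by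
  filter_upwards [eventually_lt_of_limsup_lt hlim hbdd, eventually_ne_atTop 0] with n hn hn0
  rw [one_div] at hn
  calc a n * r ^ n = (a n ^ (n : ℝ)⁻¹) ^ n * r ^ n := by
        rw [Real.rpow_inv_natCast_pow (ha n) hn0]
    _ < r⁻¹ ^ n * r ^ n := mul_lt_mul_of_pos_right
        (pow_lt_pow_left₀ hn (Real.rpow_nonneg (ha n) _) hn0) (pow_pos hr n)
    _ = 1 := by rw [← mul_pow, inv_mul_cancel₀ hr.ne', one_pow]

theorem le_of_forall_mul_pow_le {x y : ℝ} (n : ℕ) (h : ∀ r ∈ Set.Ioo (0 : ℝ) 1, x * r ^ n ≤ y) :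
    x ≤ y := by
  have hlim : Tendsto (fun r : ℝ => x * r ^ n) (𝓝[<] 1) (𝓝 x) := by
    have hcont : Continuous fun r : ℝ => x * r ^ n := by fun_prop
    exact (hcont.tendsto' 1 x (by simp)).mono_left nhdsWithin_le_nhds
  exact le_of_tendsto hlim (eventually_of_mem (Ioo_mem_nhdsLT zero_lt_one) h)

theorem IsNonarchimedean.abv_coeff_mul_pow_le_one_of_pow {K : Type*} [Field K]
    {v : AbsoluteValue K ℝ} (hna : IsNonarchimedean v) {F : K⟦X⟧} {r : ℝ} (hr0 : 0 < r)
    (hr1 : r ≤ 1) {N : ℕ} (hN : N ≠ 0) (hFN : ∀ n, v (coeff n (F ^ N)) ≤ 1)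
    (hev : ∀ᶠ j in atTop, v (coeff j F) * r ^ j < 1) (n : ℕ) : v (coeff n F) * r ^ n ≤ 1 := by
  by_contra! hn
  obtain ⟨τ, hle, hlt⟩ := exists_forall_le_and_forall_lt_of_eventually_lt
    (w := fun j => v (coeff j F) * r ^ j) (hev.mono fun j hj => hj.trans hn)
  have hM : 1 < v (coeff τ F) * r ^ τ := hn.trans_le (hle n)
  have hpow := ((IsDominantIndex.mk hle rfl hlt).pow hna hr0 N).eq
  have hle_one : (v (coeff τ F) * r ^ τ) ^ N ≤ 1 := by
    rw [← hpow]
    exact mul_le_one₀ (hFN _) (by positivity) (pow_le_one₀ hr0.le hr1)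
  exact (one_lt_pow₀ hM hN).not_ge hle_one

theorem statement_2 (p : ℕ) [Fact p.Prime] (K : Type*) [Field K] [CharZero K]
    (v : AbsoluteValue K ℝ)
    (hna : ∀ x y : K, v (x + y) ≤ max (v x) (v y))
    (hvp : v (p : K) = 1 / (p : ℝ))
    (P : Polynomial K) (hP0 : P.coeff 0 = 0)
    (b : ℕ → K) (hb : ∀ n, b n = PowerSeries.coeff n (pexp (P : PowerSeries K))) :
    Filter.limsup (fun n : ℕ => v (b n) ^ (1 / (n : ℝ))) Filter.atTop ≤ 1
      ↔ ∀ n : ℕ, v (b n) ≤ 1 := by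
  have hna : IsNonarchimedean v := hna
  have hp : p.Prime := Fact.out
  have hp1 : (1 : ℝ) < p := by exact_mod_cast hp.one_lt
  obtain rfl : b = fun n => coeff n (pexp (P : K⟦X⟧)) := funext hb
  have hf0 : constantCoeff (P : K⟦X⟧) = 0 := by
    rw [← coeff_zero_eq_constantCoeff_apply, Polynomial.coeff_coe, hP0]
  obtain ⟨B, hB0, hB⟩ := P.exists_forall_abv_coeff_le v
  have hB' : ∀ i, v (coeff i (P : K⟦X⟧)) ≤ B := by simpa only [Polynomial.coeff_coe] using hB
  constructor
  · intro hlim n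
    have hbdd := isBoundedUnder_rpow_inv_of_le_pow (fun _ => v.nonneg _) (by positivity)
      (hna.abv_coeff_pexp_le hvp hB0 hB')
    refine le_of_forall_mul_pow_le n fun r ⟨hr0, hr1⟩ => ?_
    have hev := eventually_mul_pow_lt_one_of_limsup_lt (fun _ => v.nonneg _) hbdd hr0
      (hlim.trans_lt ((one_lt_inv₀ hr0).mpr hr1))
    obtain ⟨m, hm⟩ := pow_unbounded_of_one_lt (p * B) hp1
    have hint : ∀ k, v (coeff k (pexp (P : K⟦X⟧) ^ p ^ m)) ≤ 1 := fun k => by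
      rw [pexp_pow hf0]
      exact hna.abv_coeff_pexp_pow_nsmul_le_one hvp hB0 hB' hm.le k
    exact hna.abv_coeff_mul_pow_le_one_of_pow hr0 hr1.le (pow_ne_zero m hp.ne_zero) hint hev n
  · intro h
    exact limsup_le_of_le
      (isCoboundedUnder_le_of_le atTop fun _ => Real.rpow_nonneg (v.nonneg _) _)
      (Eventually.of_forall fun n => Real.rpow_le_one (v.nonneg _) (h n) (by positivity))
end

section
/- Let d ≥ 1 and let ζ ∈ K be a primitive p^{d+1}-th root of unity. For 0 ≤ j ≤ d set ζ_j = ζ^{p^{d−j}} (a primitive p^{j+1}-th root of unity) and let w^{(j)} ∈ W(K) be the unique Witt vector with ghost components ghost_i(w^{(j)}) = ζ_j^{p^i} − 1 for all i ≥ 0. Let H(X) = ((X+1)^p − 1)/X = ∑_{k=1}^{p} binom(p,k) X^{k−1} ∈ ℤ[X]. Then for every 1 ≤ j ≤ d one has F(w^{(j)}) = w^{(j−1)} and w^{(j−1)} = w^{(j)} · H(w^{(j)}) in W(K), where H(w^{(j)}) denotes the evaluation of the integer polynomial H at the Witt vector w^{(j)}. In particular, in W(K) the principal ideals satisfy (w^{(0)})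 ⊆ (w^{(1)}) ⊆ … ⊆ (w^{(d)}). -/
/-!
Over a ring in which `p` is invertible, Witt vectors are determined by their ghost components,
and the Witt vector with ghost components `a ^ p ^ i - 1` is `[a] - 1`, where `[a]` is the
Teichmüller lift. Hence `w⁽ʲ⁾ = [ζⱼ] - 1` and `w⁽ʲ⁻¹⁾ = [ζⱼ ^ p] - 1`. The Frobenius sends
`[a]` to `[a ^ p]`, and `X * H(X) = (X + 1) ^ p - 1` together with multiplicativity of `[·]` gives
`w⁽ʲ⁾ * H(w⁽ʲ⁾) = [ζⱼ] ^ p - 1 = w⁽ʲ⁻¹⁾`.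
-/

open Polynomial

theorem Polynomial.X_mul_sum_choose_eq_add_one_pow_sub_one {R : Type*} [CommRing R] (n : ℕ) :
    X * ∑ k ∈ Finset.Icc 1 n, C (n.choose k : R) * X ^ (k - 1) = (X + 1) ^ n - 1 := by
  have range_eq : Finset.range (n + 1) = insert 0 (Finset.Icc 1 n) := by
    ext k; simp only [Finset.mem_range, Finset.mem_insert, Finset.mem_Icc]; omega
  rw [add_pow, range_eq, Finset.sum_insert (by simp), Finset.mul_sum, pow_zero,
    one_pow, mul_one, Nat.choose_zero_right, Nat.cast_one, mul_one, add_sub_cancel_left]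
  refine Finset.sum_congr rfl fun k hk => ?_
  rw [← C_eq_natCast, mul_left_comm, ← pow_succ', Nat.sub_add_cancel (Finset.mem_Icc.1 hk).1,
    one_pow, mul_one, mul_comm]

namespace WittVector

variable {p : ℕ} [Fact p.Prime] {R : Type*} [CommRing R] [Invertible (p : R)]

theorem ext_ghostComponent {x y : WittVector p R}
    (h : ∀ i, ghostComponent i x = ghostComponent i y) : x = y :=
  ghostMap.bijective_of_invertible p R |>.injective <| funext fun i => by
    simpa only [ghostMap_apply] using h i

theorem eq_teichmuller_sub_one {x : WittVector p R} {a : R}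
    (h : ∀ i, ghostComponent i x = a ^ p ^ i - 1) : x = teichmuller p a - 1 :=
  ext_ghostComponent fun i => by
    rw [h, map_sub, map_one, ghostComponent_teichmuller]

theorem frobenius_teichmuller (a : R) : frobenius (teichmuller p a) = teichmuller p (a ^ p) :=
  ext_ghostComponent fun i => by
    rw [ghostComponent_frobenius, ghostComponent_teichmuller, ghostComponent_teichmuller,
      ← pow_mul, pow_succ']

end WittVector

theorem statement_7_general (p : ℕ) [Fact p.Prime] (K : Type*) [Field K] [CharZero K]
    (d : ℕ) (ζ : K)
    (w : ℕ → WittVector p K)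
    (hw : ∀ j ≤ d, ∀ i : ℕ,
      WittVector.ghostComponent i (w j) = (ζ ^ (p ^ (d - j))) ^ (p ^ i) - 1)
    (H : Polynomial ℤ)
    (hH : H = ∑ k ∈ Finset.Icc 1 p, Polynomial.C (p.choose k : ℤ) * Polynomial.X ^ (k - 1)) :
    ∀ j : ℕ, 1 ≤ j → j ≤ d →
      WittVector.frobenius (w j) = w (j - 1)
      ∧ w (j - 1) = w j * Polynomial.aeval (w j) H
      ∧ Ideal.span {w (j - 1)} ≤ Ideal.span {w j} := by
  intro j hj1 hjd
  have : Invertible (p : K) :=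
    invertibleOfNonzero (Nat.cast_ne_zero.2 (Fact.out : p.Prime).ne_zero)
  set a := ζ ^ p ^ (d - j)
  have hwj : w j = WittVector.teichmuller p a - 1 := WittVector.eq_teichmuller_sub_one (hw j hjd)
  have hwj' : w (j - 1) = WittVector.teichmuller p (a ^ p) - 1 :=
    WittVector.eq_teichmuller_sub_one fun i => by
      rw [hw (j - 1) (by omega), show d - (j - 1) = d - j + 1 by omega, pow_succ, pow_mul]
  have hmul : w (j - 1) = w j * aeval (w j) H := by
    calc w (j - 1) = aeval (w j) ((X + 1) ^ p - 1 : ℤ[X]) := by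
          simp only [hwj, hwj', map_sub, map_pow, map_add, map_one, aeval_X, sub_add_cancel]
      _ = w j * aeval (w j) H := by
          rw [← X_mul_sum_choose_eq_add_one_pow_sub_one, ← hH, map_mul, aeval_X]
  refine ⟨?_, hmul, Ideal.span_singleton_le_span_singleton.2 (Dvd.intro _ hmul.symm)⟩
  rw [hwj, hwj', map_sub, map_one, WittVector.frobenius_teichmuller]

theorem statement_7 (p : ℕ) [Fact p.Prime] (K : Type*) [Field K] [CharZero K]
    (v : AbsoluteValue K ℝ)
    (hna : ∀ x y : K, v (x + y) ≤ max (v x) (v y))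
    (hvp : v (p : K) = 1 / (p : ℝ))
    (d : ℕ) (hd : 1 ≤ d) (ζ : K) (hζ : IsPrimitiveRoot ζ (p ^ (d + 1)))
    (w : ℕ → WittVector p K)
    (hw : ∀ j ≤ d, ∀ i : ℕ,
      WittVector.ghostComponent i (w j) = (ζ ^ (p ^ (d - j))) ^ (p ^ i) - 1)
    (H : Polynomial ℤ)
    (hH : H = ∑ k ∈ Finset.Icc 1 p, Polynomial.C (p.choose k : ℤ) * Polynomial.X ^ (k - 1)) :
    ∀ j : ℕ, 1 ≤ j → j ≤ d →
      WittVector.frobenius (w j) = w (j - 1)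
      ∧ w (j - 1) = w j * Polynomial.aeval (w j) H
      ∧ Ideal.span {w (j - 1)} ≤ Ideal.span {w j} :=
  statement_7_general p K d ζ w hw H hH
end
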